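/- arXiv:2502.07364 — 9 statements merged into one kernel-verified Lean document; each statement's English description precedes it below -/
import Mathlib

section
/- For every real number q with 0 ≤ q < 1 and every natural number d, the identity ∑_{k=0}^{d} C(d,k) (1−q)^k q^{d−k} · 1/(1+k) = (1 − q^{d+1}) / ((1−q)(d+1)) holds. (This computes the expected self-loop weight E[1/(1+M)] for M ~ Binomial(d, 1−q), i.e. the diagonal entry of the expected propagation matrix under DropEdge.) -/
/-- Expected self-loop weight under DropEdge: for `M ~ Binomial(d, 1-q)`,
`E[1/(1+M)] = (1 - q^(d+1)) / ((1-q)(d+1))`. -/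
theorem dropedge_expected_self_loop_weight (q : ℝ) (hq0 : 0 ≤ q) (hq1 : q < 1) (d : ℕ) :
    ∑ k ∈ Finset.range (d + 1),
      (d.choose k : ℝ) * (1 - q) ^ k * q ^ (d - k) * (1 / (1 + (k : ℝ)))
      = (1 - q ^ (d + 1)) / ((1 - q) * ((d : ℝ) + 1)) := by
  have hp : (0:ℝ) < 1 - q := by linarith
  have hp' : (1:ℝ) - q ≠ 0 := ne_of_gt hp
  have hd : ((d:ℝ)+1) ≠ 0 := by positivity
  rw [eq_div_iff (mul_ne_zero hp' hd), Finset.sum_mul]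
  have key : ∀ k ∈ Finset.range (d+1),
      (d.choose k : ℝ) * (1 - q) ^ k * q ^ (d - k) * (1 / (1 + (k : ℝ))) * ((1 - q) * ((d:ℝ)+1))
      = ((d+1).choose (k+1) : ℝ) * ((1 - q) ^ (k+1) * q ^ (d - k)) := by
    intro k _
    have hchoose : ((d+1).choose (k+1) : ℝ) * ((k:ℝ)+1) = ((d:ℝ)+1) * (d.choose k) := by
      have h := congrArg (Nat.cast : ℕ → ℝ) (Nat.add_one_mul_choose_eq d k)
      push_cast at h
      linarith
    have hk1 : (1 + (k:ℝ)) ≠ 0 := by positivity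
    field_simp
    linear_combination -(1-q)^(k+1) * q^(d-k) * hchoose
  rw [Finset.sum_congr rfl key]
  have h1 : ((1-q)+q)^(d+1)
      = ∑ j ∈ Finset.range (d+2), (1-q)^j * q^(d+1-j) * ((d+1).choose j : ℝ) :=
    add_pow (1-q) q (d+1)
  rw [Finset.sum_range_succ'] at h1
  simp only [Nat.succ_sub_succ, pow_zero, one_mul, Nat.choose_zero_right, Nat.cast_one,
    mul_one, Nat.sub_zero, sub_add_cancel, one_pow] at h1
  have : (1:ℝ) = ∑ k ∈ Finset.range (d+1), (1-q)^(k+1) * q^(d-k) * ((d+1).choose (k+1) : ℝ)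
      + q^(d+1) := h1
  rw [show (1 - q^(d+1) : ℝ)
      = ∑ k ∈ Finset.range (d+1), (1-q)^(k+1) * q^(d-k) * ((d+1).choose (k+1) : ℝ) by
    linarith]
  exact Finset.sum_congr rfl fun k _ => by ring
end

section
/- For every real number q with 0 ≤ q < 1 and every natural number d ≥ 1, the identity (1−q) · ∑_{k=0}^{d−1} C(d−1,k) (1−q)^k q^{d−1−k} · 1/(2+k) = (1/d) · (1 − (1 − q^{d+1}) / ((1−q)(d+1))) holds. (This computes the expected weight of a fixed incoming cross-edge of a node of in-degree d under DropEdge.) -/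
lemma de_binom_one (p q : ℝ) (h : p + q = 1) (n : ℕ) :
    ∑ j ∈ Finset.range (n+1), (n.choose j : ℝ) * p ^ j * q ^ (n - j) = 1 := by
  have h' := add_pow p q n
  rw [h, one_pow] at h'
  calc ∑ j ∈ Finset.range (n+1), (n.choose j : ℝ) * p ^ j * q ^ (n - j)
      = ∑ j ∈ Finset.range (n+1), p ^ j * q ^ (n - j) * (n.choose j : ℝ) :=
        Finset.sum_congr rfl fun j _ => by ring
    _ = 1 := h'.symm

lemma de_sumB (p q : ℝ) (h : p + q = 1) (n : ℕ) :
    ∑ j ∈ Finset.range (n+1), (j : ℝ) * (n.choose j : ℝ) * p ^ j * q ^ (n - j)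
      = n * p := by
  cases n with
  | zero => simp
  | succ m =>
    rw [Finset.sum_range_succ']
    simp only [Nat.cast_zero, zero_mul, mul_zero, zero_mul, add_zero]
    have hterm : ∀ i ∈ Finset.range (m+1),
        ((i+1 : ℕ):ℝ) * ((m+1).choose (i+1) : ℝ) * p ^ (i+1) * q ^ (m+1-(i+1))
        = ((m:ℝ)+1) * p * ((m.choose i : ℝ) * p ^ i * q ^ (m - i)) := by
      intro i _
      have hnat : (m+1) * m.choose i = (m+1).choose (i+1) * (i+1) :=
        Nat.add_one_mul_choose_eq m i
      have hcast : ((m:ℝ)+1) * (m.choose i : ℝ) = ((m+1).choose (i+1) : ℝ) * ((i:ℝ)+1) := by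
        exact_mod_cast congrArg (Nat.cast (R := ℝ)) hnat
      have hexp : m + 1 - (i+1) = m - i := by omega
      rw [hexp]
      push_cast
      linear_combination (p ^ (i+1) * q ^ (m-i)) * hcast.symm
    rw [Finset.sum_congr rfl hterm, ← Finset.mul_sum, de_binom_one p q h m, mul_one]
    push_cast; ring

lemma de_key (p q : ℝ) (h : p + q = 1) (d : ℕ) (hd : 1 ≤ d) :
    ∑ k ∈ Finset.range d, ((k:ℝ)+1) * (((d+1).choose (k+2)) : ℝ)
        * p ^ (k+2) * q ^ (d-1-k)
      = ((d:ℝ)+1) * p - 1 + q ^ (d+1) := by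
  set f : ℕ → ℝ := fun j => ((j:ℝ)-1) * ((d+1).choose j : ℝ) * p ^ j * q ^ (d+1-j) with hf
  have hfull : ∑ j ∈ Finset.range (d+2), f j = ((d:ℝ)+1) * p - 1 := by
    have hB := de_sumB p q h (d+1)
    have hA := de_binom_one p q h (d+1)
    have : ∑ j ∈ Finset.range (d+2), f j
        = ∑ j ∈ Finset.range (d+2), ((j:ℝ) * ((d+1).choose j : ℝ) * p ^ j * q ^ (d+1-j)
            - ((d+1).choose j : ℝ) * p ^ j * q ^ (d+1-j)) :=
      Finset.sum_congr rfl fun j _ => by rw [hf]; ring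
    rw [this, Finset.sum_sub_distrib]
    rw [show d + 2 = (d+1)+1 from rfl] at *
    rw [hB, hA]
    push_cast; ring
  have hsplit : ∑ j ∈ Finset.range (d+2), f j
      = (∑ k ∈ Finset.range d, f (k+2)) + f 1 + f 0 := by
    rw [Finset.sum_range_succ' f (d+1), Finset.sum_range_succ' (fun i => f (i+1)) d]
  have hf0 : f 0 = -q ^ (d+1) := by simp [hf]
  have hf1 : f 1 = 0 := by simp [hf]
  have hfk : ∀ k ∈ Finset.range d,
      f (k+2) = ((k:ℝ)+1) * (((d+1).choose (k+2)) : ℝ) * p ^ (k+2) * q ^ (d-1-k) := by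
    intro k hk
    have he : d + 1 - (k+2) = d - 1 - k := by omega
    rw [hf]; simp only []
    rw [he]
    push_cast; ring
  rw [hsplit, hf0, hf1, Finset.sum_congr rfl hfk] at hfull
  linarith [hfull]

/-- Expected cross-edge weight under DropEdge: for a node of in-degree `d ≥ 1`,
`(1-q) · E[1/(2+K)] = (1/d)(1 - (1 - q^(d+1))/((1-q)(d+1)))` where
`K ~ Binomial(d-1, 1-q)`. -/
theorem dropedge_expected_cross_edge_weight (q : ℝ) (hq0 : 0 ≤ q) (hq1 : q < 1)
    (d : ℕ) (hd : 1 ≤ d) :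
    (1 - q) * ∑ k ∈ Finset.range d,
      ((d - 1).choose k : ℝ) * (1 - q) ^ k * q ^ (d - 1 - k) * (1 / (2 + (k : ℝ)))
      = (1 / (d : ℝ)) * (1 - (1 - q ^ (d + 1)) / ((1 - q) * ((d : ℝ) + 1))) := by
  set p := 1 - q with hp
  have hpq : p + q = 1 := by rw [hp]; ring
  have hp0 : 0 < p := by rw [hp]; linarith
  have hd0 : (0:ℝ) < (d:ℝ) := by exact_mod_cast hd
  have hterm : ∀ k ∈ Finset.range d,
      (p^2 * (d:ℝ) * ((d:ℝ)+1)) *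
        (((d - 1).choose k : ℝ) * p ^ k * q ^ (d - 1 - k) * (1 / (2 + (k : ℝ))))
      = ((k:ℝ)+1) * (((d+1).choose (k+2)) : ℝ) * p ^ (k+2) * q ^ (d-1-k) := by
    intro k hk
    have h1 : (d+1) * d.choose (k+1) = (d+1).choose (k+2) * (k+2) :=
      Nat.add_one_mul_choose_eq d (k+1)
    have h2 : d * (d-1).choose k = d.choose (k+1) * (k+1) := by
      have h3 := Nat.add_one_mul_choose_eq (d-1) k
      have hdd : d - 1 + 1 = d := by omega
      simpa [Nat.succ_eq_add_one, hdd] using h3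
    have hc1 : ((d:ℝ)+1) * (d.choose (k+1) : ℝ) = ((d+1).choose (k+2) : ℝ) * ((k:ℝ)+2) := by
      exact_mod_cast congrArg (Nat.cast (R := ℝ)) h1
    have hc2 : (d:ℝ) * ((d-1).choose k : ℝ) = (d.choose (k+1) : ℝ) * ((k:ℝ)+1) := by
      exact_mod_cast congrArg (Nat.cast (R := ℝ)) h2
    have hk2 : (2:ℝ) + (k:ℝ) ≠ 0 := by positivity
    field_simp
    linear_combination (p ^ (k+2) * q ^ (d-1-k)) *
      ((((d:ℝ))+1) * hc2 + (((k:ℝ))+1) * hc1)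
  have hsum : (p^2 * (d:ℝ) * ((d:ℝ)+1)) *
      (∑ k ∈ Finset.range d,
        ((d - 1).choose k : ℝ) * p ^ k * q ^ (d - 1 - k) * (1 / (2 + (k : ℝ))))
      = ((d:ℝ)+1) * p - 1 + q ^ (d+1) := by
    rw [Finset.mul_sum, Finset.sum_congr rfl hterm]
    exact de_key p q hpq d hd
  have hpne : p ≠ 0 := ne_of_gt hp0
  have hdne : (d:ℝ) ≠ 0 := ne_of_gt hd0
  have hd1 : ((d:ℝ)) + 1 ≠ 0 := by positivity
  generalize hSS : (∑ k ∈ Finset.range d,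
      ((d - 1).choose k : ℝ) * p ^ k * q ^ (d - 1 - k) * (1 / (2 + (k : ℝ)))) = S at hsum ⊢
  rw [hp] at hsum
  field_simp
  linear_combination hsum
end

section
/- For every real number q with 0 < q < 1 and every natural number d ≥ 1, we have (1/d)·(1 − (1 − q^{d+1}) / ((1−q)(d+1))) < 1/(d+1). That is, in a 1-layer linear GCN with asymmetric normalization, DropEdge strictly decreases the expected sensitivity of a node's representation to each of its neighbors' input features compared to the NoDrop model. -/
open Finset

/- Writing `(1 - q ^ (d + 1)) / (1 - q)` as the geometric sum `1 + q + ⋯ + q ^ d`, which exceeds `1`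
as soon as `q > 0` and `d ≥ 1`, the DropEdge weight is `(1 / d) · (1 - S / (d + 1))` with `S > 1`,
whereas the NoDrop weight `1 / (d + 1)` is the same expression at `S = 1`. -/

theorem one_lt_geom_sum {α : Type*} [Semiring α] [PartialOrder α] [IsStrictOrderedRing α]
    {x : α} (hx : 0 < x) {n : ℕ} (hn : n ≠ 0) : 1 < ∑ i ∈ range (n + 1), x ^ i := by
  rw [sum_range_succ', pow_zero]
  exact lt_add_of_pos_left 1 (sum_pos (fun i _ ↦ pow_pos hx _) (nonempty_range_iff.2 hn))

theorem one_div_mul_one_sub_div_add_one_lt {α : Type*} [Field α] [LinearOrder α]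
    [IsStrictOrderedRing α] {d S : α} (hd : 0 < d) (hS : 1 < S) :
    1 / d * (1 - S / (d + 1)) < 1 / (d + 1) := by
  have hd1 : 0 < d + 1 := by linarith
  calc 1 / d * (1 - S / (d + 1)) < 1 / d * (1 - 1 / (d + 1)) := by gcongr
    _ = 1 / (d + 1) := by field_simp; ring

/-- DropEdge strictly decreases the expected cross-edge weight (sensitivity to each
neighbor's features) compared to the NoDrop model. -/
theorem dropedge_neighbor_sensitivity_decreases (q : ℝ) (hq0 : 0 < q) (hq1 : q < 1)
    (d : ℕ) (hd : 1 ≤ d) :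
    (1 / (d : ℝ)) * (1 - (1 - q ^ (d + 1)) / ((1 - q) * ((d : ℝ) + 1)))
      < 1 / ((d : ℝ) + 1) := by
  have hgeom : (1 - q ^ (d + 1)) / ((1 - q) * ((d : ℝ) + 1))
      = (∑ i ∈ range (d + 1), q ^ i) / ((d : ℝ) + 1) := by
    rw [geom_sum_eq hq1.ne, div_div, ← neg_sub q, ← neg_sub (q ^ (d + 1)), neg_mul,
      neg_div_neg_eq]
  rw [hgeom]
  exact one_div_mul_one_sub_div_add_one_lt (by exact_mod_cast hd)
    (one_lt_geom_sum hq0 (by omega))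
end

section
/- For every real number q with 0 < q < 1 and every natural number d ≥ 2, we have (1−q)/(d+1) < (1/d)·(1 − (1 − q^{d+1}) / ((1−q)(d+1))). That is, the expected cross-edge weight under DropAgg is strictly smaller than the expected cross-edge weight under DropEdge. -/
/-!
Clearing the factor `1 - q` turns the DropEdge weight into `(1/d) (1 - S/(d+1))` with
`S = 1 + q + ⋯ + q^d`, while the DropAgg weight is `(1/d) (1 - (1 + d q)/(d+1))`. Both are strictly
decreasing in the middle quantity, and `S < 1 + d q` because `q^k < q` for `2 ≤ k ≤ d`.
-/

open Finset

lemma geom_sum_lt_one_add_mul {q : ℝ} (hq0 : 0 < q) (hq1 : q < 1) {n : ℕ} (hn : 2 ≤ n) :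
    ∑ i ∈ range (n + 1), q ^ i < 1 + n * q := by
  have hpow_le : ∀ i ∈ range n, q ^ (i + 1) ≤ q := fun i _ ↦
    pow_le_of_le_one hq0.le hq1.le i.succ_ne_zero
  have hsq_lt : q ^ (1 + 1) < q := pow_lt_self_of_lt_one₀ hq0 hq1 one_lt_two
  have hone_mem : 1 ∈ range n := mem_range.2 (by omega)
  calc ∑ i ∈ range (n + 1), q ^ i = ∑ i ∈ range n, q ^ (i + 1) + 1 := by
        simp [sum_range_succ']
    _ < ∑ _i ∈ range n, q + 1 := by
        gcongr ?_ + 1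
        exact sum_lt_sum hpow_le ⟨1, hone_mem, hsq_lt⟩
    _ = 1 + n * q := by simp [add_comm]

lemma one_sub_pow_succ_div {q : ℝ} (hq : q ≠ 1) (n : ℕ) :
    (1 - q ^ (n + 1)) / ((1 - q) * ((n : ℝ) + 1)) = (∑ i ∈ range (n + 1), q ^ i) / ((n : ℝ) + 1) := by
  rw [← mul_neg_geom_sum, mul_div_mul_left _ _ (sub_ne_zero.2 hq.symm)]

lemma one_sub_div_eq_inv_mul_one_sub {d : ℕ} (hd : d ≠ 0) (q : ℝ) :
    (1 - q) / ((d : ℝ) + 1) = 1 / (d : ℝ) * (1 - (1 + d * q) / ((d : ℝ) + 1)) := by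
  field_simp
  ring

/-- The expected cross-edge weight under DropAgg, `(1−q)/(d+1)`, is strictly smaller
than the expected cross-edge weight under DropEdge. -/
theorem dropagg_cross_edge_below_dropedge (q : ℝ) (hq0 : 0 < q) (hq1 : q < 1)
    (d : ℕ) (hd : 2 ≤ d) :
    (1 - q) / ((d : ℝ) + 1)
      < (1 / (d : ℝ)) * (1 - (1 - q ^ (d + 1)) / ((1 - q) * ((d : ℝ) + 1))) := by
  rw [one_sub_pow_succ_div hq1.ne, one_sub_div_eq_inv_mul_one_sub (by omega : d ≠ 0) q]
  gcongr
  exact geom_sum_lt_one_add_mul hq0 hq1 hd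
end

section
/- For every real number q with 0 < q < 1 and every natural number d ≥ 1, we have (1/d)·(1 − q − (1 − q^{d+1})/(d+1)) < (1−q)/(d+1). That is, the expected cross-edge weight under DropGNN is strictly smaller than the expected cross-edge weight under DropAgg. -/
/-- The expected cross-edge weight under DropGNN is strictly smaller than the one
under DropAgg: `(1/d)(1 − q − (1 − q^(d+1))/(d+1)) < (1−q)/(d+1)`. -/
theorem dropgnn_cross_edge_below_dropagg (q : ℝ) (hq0 : 0 < q) (hq1 : q < 1)
    (d : ℕ) (hd : 1 ≤ d) :
    (1 / (d : ℝ)) * (1 - q - (1 - q ^ (d + 1)) / ((d : ℝ) + 1))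
      < (1 - q) / ((d : ℝ) + 1) := by
  have hd0 : (0:ℝ) < d := by exact_mod_cast hd
  have hd1 : (0:ℝ) < (d:ℝ) + 1 := by linarith
  have hpow : q ^ (d + 1) < q := by
    calc q ^ (d + 1) ≤ q ^ 2 :=
          pow_le_pow_of_le_one (le_of_lt hq0) (le_of_lt hq1) (by omega)
      _ < q := by nlinarith
  rw [div_mul_eq_mul_div, one_mul, div_lt_div_iff₀ hd0 hd1]
  field_simp
  nlinarith
end

section
/- For every real number q with 0 < q < 1, every natural number L ≥ 1, and every finite sequence of natural numbers d_1, …, d_L each at least 1, we have ∏_{ℓ=1}^{L} (1/d_ℓ)·(1 − (1 − q^{d_ℓ+1}) / ((1−q)(d_ℓ+1))) < ∏_{ℓ=1}^{L} 1/(d_ℓ+1). That is, along any path of length L whose intermediate target nodes have in-degrees d_1, …, d_L, the product of DropEdge expected cross-edge weights is strictly smaller than the product of the corresponding NoDrop weights. -/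
lemma dropedge_factor_bounds (q : ℝ) (hq0 : 0 < q) (hq1 : q < 1) (d : ℕ) (hd : 1 ≤ d) :
    0 < (1 / (d : ℝ)) * (1 - (1 - q ^ (d + 1)) / ((1 - q) * ((d : ℝ) + 1))) ∧
    (1 / (d : ℝ)) * (1 - (1 - q ^ (d + 1)) / ((1 - q) * ((d : ℝ) + 1)))
      < 1 / ((d : ℝ) + 1) := by
  set s : ℝ := ∑ i ∈ Finset.range (d + 1), q ^ i with hs
  have hq1' : q ≠ 1 := ne_of_lt hq1
  have hgeo : (1 - q ^ (d + 1)) / (1 - q) = s := by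
    rw [hs, geom_sum_eq hq1']
    rw [div_eq_div_iff (by linarith) (by linarith)]
    ring
  have hrw : (1 - q ^ (d + 1)) / ((1 - q) * ((d : ℝ) + 1)) = s / ((d : ℝ) + 1) := by
    rw [← hgeo, div_div]
  have hd1 : (1 : ℝ) ≤ (d : ℝ) := by exact_mod_cast hd
  have hs1 : 1 + q ≤ s := by
    have hsub : Finset.range 2 ⊆ Finset.range (d + 1) := by
      apply Finset.range_subset_range.mpr; omega
    have h := Finset.sum_le_sum_of_subset_of_nonneg hsub
      (fun i _ _ => le_of_lt (pow_pos hq0 i))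
    have h2 : ∑ i ∈ Finset.range 2, q ^ i = 1 + q := by
      simp [Finset.sum_range_succ]
    rw [hs, ← h2]; exact h
  have hsu : s < (d : ℝ) + 1 := by
    have h := Finset.sum_lt_sum (f := fun i => q ^ i) (g := fun _ => (1 : ℝ))
      (s := Finset.range (d + 1))
      (fun i _ => pow_le_one₀ hq0.le hq1.le)
      ⟨1, Finset.mem_range.mpr (by omega), by simpa using hq1⟩
    simpa using h
  have hslb : 1 < s := by linarith
  constructor
  · apply mul_pos (by positivity)
    rw [hrw]
    rw [sub_pos, div_lt_one (by linarith)]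
    exact hsu
  · rw [hrw, div_mul_eq_mul_div, div_lt_div_iff₀ (by linarith) (by linarith)]
    have : 1 * (1 - s / ((d : ℝ) + 1)) * ((d : ℝ) + 1) = (d : ℝ) + 1 - s := by
      field_simp
    rw [this]
    linarith

/-- Along any path of length `L` whose intermediate target nodes have in-degrees
`d 1, …, d L` (each at least 1), the product of DropEdge expected cross-edge weights
is strictly smaller than the product of the corresponding NoDrop weights. -/
theorem dropedge_path_product_below_nodrop (q : ℝ) (hq0 : 0 < q) (hq1 : q < 1)
    (L : ℕ) (hL : 1 ≤ L) (d : Fin L → ℕ) (hd : ∀ ℓ, 1 ≤ d ℓ) :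
    ∏ ℓ, (1 / (d ℓ : ℝ)) *
        (1 - (1 - q ^ (d ℓ + 1)) / ((1 - q) * ((d ℓ : ℝ) + 1)))
      < ∏ ℓ, 1 / ((d ℓ : ℝ) + 1) := by
  have hne : (Finset.univ : Finset (Fin L)).Nonempty := by
    have : Nonempty (Fin L) := ⟨⟨0, hL⟩⟩
    exact Finset.univ_nonempty
  apply Finset.prod_lt_prod_of_nonempty
  · intro i _
    exact (dropedge_factor_bounds q hq0 hq1 (d i) (hd i)).1
  · intro i _
    exact (dropedge_factor_bounds q hq0 hq1 (d i) (hd i)).2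
  · exact hne
end

section
/- Let N ≥ 1 and let A be an N×N matrix with entries in {0,1} and zero diagonal whose row sums d_i = ∑_j A_{ij} satisfy d_i ≥ 1 for every i. Fix q with 0 < q < 1. Define the NoDrop propagation matrix P by P_{ij} = (A_{ij} + δ_{ij})/(d_i + 1), and the DropEdge expected propagation matrix Ṗ by Ṗ_{ii} = (1 − q^{d_i+1})/((1−q)(d_i+1)) and Ṗ_{ij} = A_{ij} · (1/d_i)·(1 − (1 − q^{d_i+1})/((1−q)(d_i+1))) for i ≠ j. Suppose i ≠ j, (A^L)_{ij} > 0, and ((A+I)^{L−1})_{ij} = 0 (i.e., the geodesic distance from j to i is exactly L). Then (Ṗ^L)_{ij} < (P^L)_{ij}. In particular, in an L-layer linear GCN with asymmetrically normalized adjacency, DropEdge strictly decreases the expected sensitivity of node i to every node j exactly L hops away. -/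
private lemma pow_entry_le {N : ℕ} {M M' : Matrix (Fin N) (Fin N) ℝ}
    (h0 : ∀ i j, 0 ≤ M i j) (h1 : ∀ i j, M i j ≤ M' i j) (L : ℕ) :
    (∀ i j, 0 ≤ (M ^ L) i j) ∧ (∀ i j, (M ^ L) i j ≤ (M' ^ L) i j) := by
  induction L with
  | zero =>
      constructor <;> intro i j <;> simp only [pow_zero, Matrix.one_apply] <;>
        split <;> norm_num
  | succ L ih =>
      obtain ⟨ih0, ih1⟩ := ih
      constructor <;> intro i j <;> simp only [pow_succ, Matrix.mul_apply]
      · exact Finset.sum_nonneg fun k _ => mul_nonneg (ih0 i k) (h0 k j)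
      · exact Finset.sum_le_sum fun k _ =>
          mul_le_mul (ih1 i k) (h1 k j) (h0 k j) (le_trans (ih0 i k) (ih1 i k))

private lemma offdiag_pow_eq {N : ℕ} {A M B : Matrix (Fin N) (Fin N) ℝ}
    (hA0 : ∀ i j, 0 ≤ (A + 1) i j)
    (hM0 : ∀ i j, 0 ≤ M i j) (hMA : ∀ i j, M i j ≤ (A + 1) i j)
    (hB : ∀ i j, B i j = if i = j then 0 else M i j) :
    ∀ L (i j : Fin N), ((A + 1) ^ L) i j = 0 →
      (M ^ (L + 1)) i j = (B ^ (L + 1)) i j := by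
  intro L
  induction L with
  | zero =>
      intro i j h
      simp only [pow_zero, Matrix.one_apply] at h
      have hij : i ≠ j := by intro e; simp [e] at h
      simp [pow_one, hB, hij]
  | succ L ih =>
      intro i j h
      have hApow := pow_entry_le hA0 (fun i j => le_refl ((A+1) i j)) L
      have hterm : ∀ k, (A + 1) i k * ((A + 1) ^ L) k j = 0 := by
        have hsum : ∑ k, (A + 1) i k * ((A + 1) ^ L) k j = 0 := by
          rw [← Matrix.mul_apply, ← pow_succ']; exact h
        intro k
        exact (Finset.sum_eq_zero_iff_of_nonneg (fun k _ =>
          mul_nonneg (hA0 i k) ((hApow.1) k j))).1 hsum k (Finset.mem_univ k)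
      rw [pow_succ' M (L + 1), pow_succ' B (L + 1), Matrix.mul_apply, Matrix.mul_apply]
      apply Finset.sum_congr rfl
      intro k _
      by_cases hik : i = k
      · subst hik
        have hle := (pow_entry_le hM0 hMA (L + 1)).2 i j
        have hge := (pow_entry_le hM0 hMA (L + 1)).1 i j
        have hMij : (M ^ (L + 1)) i j = 0 := le_antisymm (by rw [← h]; exact hle) hge
        rw [hB, hMij]; simp
      · by_cases hM : M i k = 0
        · rw [hB, if_neg hik, hM]; ring
        · have hApos : 0 < (A + 1) i k :=
            lt_of_lt_of_le (lt_of_le_of_ne (hM0 i k) (Ne.symm hM)) (hMA i k)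
          have h0 : ((A + 1) ^ L) k j = 0 := by
            rcases mul_eq_zero.1 (hterm k) with h' | h'
            · exact absurd h' (ne_of_gt hApos)
            · exact h'
          rw [hB, if_neg hik, ih k j h0]

/-- In an `L`-layer linear GCN with asymmetrically normalized adjacency, DropEdge
strictly decreases the expected sensitivity of node `i` to every node `j` exactly
`L` hops away: `(Ṗ^L)_{ij} < (P^L)_{ij}`. -/
theorem dropedge_decreases_L_hop_sensitivity (N : ℕ) (hN : 1 ≤ N)
    (A : Matrix (Fin N) (Fin N) ℝ)
    (hA01 : ∀ i j, A i j = 0 ∨ A i j = 1)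
    (hAdiag : ∀ i, A i i = 0)
    (d : Fin N → ℕ) (hd : ∀ i, (d i : ℝ) = ∑ j, A i j) (hd1 : ∀ i, 1 ≤ d i)
    (q : ℝ) (hq0 : 0 < q) (hq1 : q < 1)
    (P Pdot : Matrix (Fin N) (Fin N) ℝ)
    (hP : ∀ i j, P i j = (A i j + if i = j then 1 else 0) / ((d i : ℝ) + 1))
    (hPdotDiag : ∀ i, Pdot i i = (1 - q ^ (d i + 1)) / ((1 - q) * ((d i : ℝ) + 1)))
    (hPdotOff : ∀ i j, i ≠ j → Pdot i j =
      A i j * ((1 / (d i : ℝ)) *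
        (1 - (1 - q ^ (d i + 1)) / ((1 - q) * ((d i : ℝ) + 1)))))
    (L : ℕ) (hL : 1 ≤ L) (i j : Fin N) (hij : i ≠ j)
    (hreach : 0 < (A ^ L) i j) (hdist : ((A + 1) ^ (L - 1)) i j = 0) :
    (Pdot ^ L) i j < (P ^ L) i j := by
  have hNE : Nonempty (Fin N) := ⟨⟨0, hN⟩⟩
  set α : Fin N → ℝ := fun k => (1 - q ^ (d k + 1)) / ((1 - q) * ((d k : ℝ) + 1)) with hαdef
  have hq' : (0:ℝ) < 1 - q := by linarith
  have hdpos : ∀ k, (0:ℝ) < d k := fun k => by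
    have := hd1 k; exact_mod_cast Nat.lt_of_lt_of_le Nat.zero_lt_one this
  have hA0 : ∀ a b, 0 ≤ A a b := fun a b => by rcases hA01 a b with h | h <;> rw [h] <;> norm_num
  have hA1le : ∀ a b, A a b ≤ 1 := fun a b => by rcases hA01 a b with h | h <;> rw [h] <;> norm_num
  have hα0 : ∀ k, 0 ≤ α k := by
    intro k
    have hqn : q ^ (d k + 1) ≤ 1 := pow_le_one₀ hq0.le hq1.le
    have : (0:ℝ) < (1 - q) * ((d k : ℝ) + 1) := by positivity
    exact div_nonneg (by linarith) this.le
  have hα1 : ∀ k, α k ≤ 1 := by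
    intro k
    have hbern : 1 + ((d k + 1 : ℕ) : ℝ) * (q - 1) ≤ (1 + (q - 1)) ^ (d k + 1) :=
      one_add_mul_le_pow (by linarith) (d k + 1)
    rw [show (1:ℝ) + (q - 1) = q from by ring] at hbern
    have hb : 1 - q ^ (d k + 1) ≤ ((d k : ℝ) + 1) * (1 - q) := by
      push_cast at hbern
      nlinarith [hbern]
    have hden : (0:ℝ) < (1 - q) * ((d k : ℝ) + 1) := by positivity
    rw [hαdef, div_le_one hden]
    nlinarith
  set r : Fin N → ℝ := fun k => (1 - α k) * ((d k : ℝ) + 1) / d k with hrdef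
  have hr0 : ∀ k, 0 ≤ r k := fun k =>
    div_nonneg (mul_nonneg (by linarith [hα1 k]) (by linarith [hdpos k])) (hdpos k).le
  have hr1 : ∀ k, r k < 1 := by
    intro k
    have hqq : q ^ (d k + 1) < q := by
      have h2 : q ^ (d k + 1) ≤ q ^ 2 :=
        pow_le_pow_of_le_one hq0.le hq1.le (by have := hd1 k; omega)
      nlinarith
    have hα' : 1 < α k * ((d k : ℝ) + 1) := by
      rw [hαdef]
      have : (1 - q ^ (d k + 1)) / ((1 - q) * ((d k : ℝ) + 1)) * ((d k : ℝ) + 1)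
          = (1 - q ^ (d k + 1)) / (1 - q) := by
        field_simp
      rw [this, lt_div_iff₀ hq']
      nlinarith
    rw [hrdef, div_lt_one (hdpos k)]
    nlinarith
  -- off-diagonal parts
  set B : Matrix (Fin N) (Fin N) ℝ :=
    Matrix.of fun a b => if a = b then 0 else Pdot a b with hBdef
  set B' : Matrix (Fin N) (Fin N) ℝ :=
    Matrix.of fun a b => if a = b then 0 else P a b with hB'def
  have hBapp : ∀ a b, B a b = if a = b then 0 else Pdot a b := fun a b => rfl
  have hB'app : ∀ a b, B' a b = if a = b then 0 else P a b := fun a b => rfl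
  -- entrywise facts
  have hP0 : ∀ a b, 0 ≤ P a b := by
    intro a b; rw [hP]
    have : (0:ℝ) < (d a : ℝ) + 1 := by linarith [hdpos a]
    apply div_nonneg _ this.le
    have := hA0 a b; split <;> linarith
  have hPA : ∀ a b, P a b ≤ (A + 1) a b := by
    intro a b
    rw [hP]
    have h1 : (1:ℝ) ≤ (d a : ℝ) + 1 := by linarith [hdpos a]
    have hnum : (0:ℝ) ≤ A a b + if a = b then 1 else 0 := by
      have := hA0 a b; split <;> linarith
    have : (A a b + if a = b then 1 else 0) / ((d a : ℝ) + 1)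
        ≤ A a b + if a = b then 1 else 0 := div_le_self hnum h1
    simpa [Matrix.add_apply, Matrix.one_apply] using this
  have hPdot0 : ∀ a b, 0 ≤ Pdot a b := by
    intro a b
    by_cases hab : a = b
    · subst hab; rw [hPdotDiag]; exact hα0 a
    · rw [hPdotOff a b hab]
      have h1 : 0 ≤ 1 / (d a : ℝ) := by positivity
      have h2 : (0:ℝ) ≤ 1 - α a := by linarith [hα1 a]
      exact mul_nonneg (hA0 a b) (mul_nonneg h1 h2)
  have hPdotA : ∀ a b, Pdot a b ≤ (A + 1) a b := by
    intro a b
    by_cases hab : a = b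
    · subst hab
      rw [hPdotDiag]
      have := hα1 a
      simp only [Matrix.add_apply, Matrix.one_apply_eq, hAdiag a]
      linarith [hα1 a]
    · rw [hPdotOff a b hab]
      have hfac : 1 / (d a : ℝ) * (1 - α a) ≤ 1 := by
        have h1 : 1 / (d a : ℝ) ≤ 1 := by
          rw [div_le_one (hdpos a)]
          exact_mod_cast hd1 a
        have h2 : (1:ℝ) - α a ≤ 1 := by linarith [hα0 a]
        have h3 : (0:ℝ) ≤ 1 / (d a : ℝ) := by positivity
        nlinarith [hα1 a]
      have : A a b * (1 / (d a : ℝ) * (1 - α a)) ≤ A a b * 1 :=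
        mul_le_mul_of_nonneg_left hfac (hA0 a b)
      simp only [Matrix.add_apply, Matrix.one_apply, if_neg hab]
      linarith
  have hA1nn : ∀ a b, 0 ≤ (A + 1) a b := fun a b =>
    le_trans (hP0 a b) (hPA a b)
  -- B = r • B' rowwise
  have hB'0 : ∀ a b, 0 ≤ B' a b := by
    intro a b; rw [hB'app]; split
    · exact le_refl 0
    · exact hP0 a b
  have hBr : ∀ a b, B a b = r a * B' a b := by
    intro a b
    rw [hBapp, hB'app]
    by_cases hab : a = b
    · simp [hab]
    · rw [if_neg hab, if_neg hab, hPdotOff a b hab, hP a b, if_neg hab]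
      have hra : r a = (1 - α a) * ((d a : ℝ) + 1) / (d a) := rfl
      rw [hra]
      have hαa : (1 - q ^ (d a + 1)) / ((1 - q) * ((d a : ℝ) + 1)) = α a := rfl
      rw [hαa]
      have h1 : (d a : ℝ) ≠ 0 := (hdpos a).ne'
      have h2 : (d a : ℝ) + 1 ≠ 0 := by positivity
      generalize α a = w
      field_simp
      ring
  set c : ℝ := Finset.univ.sup' Finset.univ_nonempty r with hcdef
  have hrc : ∀ k, r k ≤ c := fun k => Finset.le_sup' r (Finset.mem_univ k)
  have hc1 : c < 1 := (Finset.sup'_lt_iff Finset.univ_nonempty).2 fun k _ => hr1 k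
  have hc0 : 0 ≤ c := le_trans (hr0 (Classical.arbitrary (Fin N))) (hrc _)
  have hB0 : ∀ a b, 0 ≤ B a b := by
    intro a b; rw [hBr]; exact mul_nonneg (hr0 a) (hB'0 a b)
  have hBc : ∀ a b, B a b ≤ (c • B') a b := by
    intro a b
    rw [hBr]
    simp only [Matrix.smul_apply, smul_eq_mul]
    exact mul_le_mul_of_nonneg_right (hrc a) (hB'0 a b)
  -- B'^L positive entry
  set ε : ℝ := 1 / ((N : ℝ) + 1) with hεdef
  have hεpos : 0 < ε := by positivity
  have hdN : ∀ k, (d k : ℝ) ≤ N := by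
    intro k
    rw [hd]
    calc ∑ b, A k b ≤ ∑ _b : Fin N, (1:ℝ) := Finset.sum_le_sum fun b _ => hA1le k b
    _ = N := by simp
  have hεA0 : ∀ a b, 0 ≤ (ε • A) a b := by
    intro a b; simp only [Matrix.smul_apply, smul_eq_mul]
    exact mul_nonneg hεpos.le (hA0 a b)
  have hεAB : ∀ a b, (ε • A) a b ≤ B' a b := by
    intro a b
    simp only [Matrix.smul_apply, smul_eq_mul]
    rw [hB'app]
    by_cases hab : a = b
    · subst hab; simp [hAdiag a]
    · rw [if_neg hab, hP a b, if_neg hab]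
      have h1 : ε ≤ 1 / ((d a : ℝ) + 1) := by
        rw [hεdef]
        apply one_div_le_one_div_of_le (by linarith [hdpos a])
        linarith [hdN a]
      have : ε * A a b ≤ (1 / ((d a : ℝ) + 1)) * A a b :=
        mul_le_mul_of_nonneg_right h1 (hA0 a b)
      calc ε * A a b ≤ (1 / ((d a : ℝ) + 1)) * A a b := this
      _ = (A a b + 0) / ((d a : ℝ) + 1) := by ring
  have hB'pos : 0 < (B' ^ L) i j := by
    have h2 := (pow_entry_le hεA0 hεAB L).2 i j
    have hsp : ((ε • A) ^ L) i j = ε ^ L * (A ^ L) i j := by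
      rw [smul_pow]; simp
    have : 0 < ε ^ L * (A ^ L) i j := mul_pos (pow_pos hεpos L) hreach
    linarith [h2, hsp ▸ this]
  -- reduction to off-diagonal parts
  obtain ⟨L', rfl⟩ : ∃ L', L = L' + 1 := ⟨L - 1, (Nat.succ_pred_eq_of_pos hL).symm⟩
  have hL1 : L' + 1 - 1 = L' := rfl
  rw [hL1] at hdist
  have heq1 : (Pdot ^ (L' + 1)) i j = (B ^ (L' + 1)) i j :=
    offdiag_pow_eq hA1nn hPdot0 hPdotA hBapp L' i j hdist
  have heq2 : (P ^ (L' + 1)) i j = (B' ^ (L' + 1)) i j :=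
    offdiag_pow_eq hA1nn hP0 hPA hB'app L' i j hdist
  rw [heq1, heq2]
  have hle := (pow_entry_le hB0 hBc (L' + 1)).2 i j
  have hsp : ((c • B') ^ (L' + 1)) i j = c ^ (L' + 1) * (B' ^ (L' + 1)) i j := by
    rw [smul_pow]; simp
  have hcL : c ^ (L' + 1) < 1 := pow_lt_one₀ hc0 hc1 (Nat.succ_ne_zero L')
  calc (B ^ (L' + 1)) i j ≤ c ^ (L' + 1) * (B' ^ (L' + 1)) i j := by rw [← hsp]; exact hle
  _ < 1 * (B' ^ (L' + 1)) i j := mul_lt_mul_of_pos_right hcL hB'pos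
  _ = (B' ^ (L' + 1)) i j := one_mul _
end

section
/- For all real numbers q₁, q₂ with 0 < q₁ < q₂ < 1, every natural number L ≥ 1, and every finite sequence of natural numbers d_1, …, d_L each at least 1, we have ∏_{ℓ=1}^{L} w_DE(q₂, d_ℓ) < ∏_{ℓ=1}^{L} w_DE(q₁, d_ℓ), where w_DE(q,d) = (1/d)·(1 − (1 − q^{d+1}) / ((1−q)(d+1))). That is, the product of DropEdge expected cross-edge weights along any path strictly decreases as the dropping probability increases. -/
/-- The DropEdge expected cross-edge weight for a node of in-degree `d`. -/
noncomputable def wDE (q : ℝ) (d : ℕ) : ℝ :=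
  (1 / (d : ℝ)) * (1 - (1 - q ^ (d + 1)) / ((1 - q) * ((d : ℝ) + 1)))

lemma wDE_eq {q : ℝ} (hq : q ≠ 1) {d : ℕ} (hd : 1 ≤ d) :
    wDE q d = (1 / (d : ℝ)) * ((∑ k ∈ Finset.range (d + 1), (1 - q ^ k)) / ((d : ℝ) + 1)) := by
  have h1 : q - 1 ≠ 0 := sub_ne_zero.mpr hq
  have h1' : (1:ℝ) - q ≠ 0 := fun h => h1 (by linarith)
  have hdne : (d : ℝ) ≠ 0 := Nat.cast_ne_zero.mpr (by omega)
  have hd1 : (d : ℝ) + 1 ≠ 0 := by positivity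
  have hs : ∑ k ∈ Finset.range (d + 1), q ^ k = (q ^ (d + 1) - 1) / (q - 1) := geom_sum_eq hq _
  have hsum : ∑ k ∈ Finset.range (d + 1), (1 - q ^ k)
      = ((d : ℝ) + 1) - (q ^ (d + 1) - 1) / (q - 1) := by
    rw [Finset.sum_sub_distrib, hs, Finset.sum_const, Finset.card_range]
    push_cast; ring
  rw [hsum]
  unfold wDE
  field_simp
  ring

lemma sum_pos_aux {q : ℝ} (hq0 : 0 < q) (hq1 : q < 1) {d : ℕ} (hd : 1 ≤ d) :
    0 < ∑ k ∈ Finset.range (d + 1), (1 - q ^ k) := by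
  apply Finset.sum_pos' (fun k _ => by
    have : q ^ k ≤ 1 := pow_le_one₀ hq0.le hq1.le
    linarith)
  exact ⟨1, Finset.mem_range.mpr (by omega), by simpa using hq1⟩

lemma wDE_pos {q : ℝ} (hq0 : 0 < q) (hq1 : q < 1) {d : ℕ} (hd : 1 ≤ d) : 0 < wDE q d := by
  rw [wDE_eq hq1.ne hd]
  have hdpos : (0:ℝ) < d := by exact_mod_cast by omega
  have := sum_pos_aux hq0 hq1 hd
  positivity

lemma wDE_lt {q₁ q₂ : ℝ} (hq1 : 0 < q₁) (hq12 : q₁ < q₂) (hq2 : q₂ < 1) {d : ℕ} (hd : 1 ≤ d) :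
    wDE q₂ d < wDE q₁ d := by
  rw [wDE_eq hq2.ne hd, wDE_eq (by linarith : q₁ ≠ 1) hd]
  have hdpos : (0:ℝ) < d := by exact_mod_cast by omega
  have hsum : ∑ k ∈ Finset.range (d + 1), (1 - q₂ ^ k)
      < ∑ k ∈ Finset.range (d + 1), (1 - q₁ ^ k) := by
    apply Finset.sum_lt_sum (fun k _ => by
      have : q₁ ^ k ≤ q₂ ^ k := pow_le_pow_left₀ hq1.le hq12.le k
      linarith)
    exact ⟨1, Finset.mem_range.mpr (by omega), by simpa using hq12⟩
  have h1 : (0:ℝ) < (d : ℝ) + 1 := by positivity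
  gcongr

/-- The product of DropEdge expected cross-edge weights along any path strictly
decreases as the dropping probability increases. -/
theorem dropedge_path_product_antitone_in_q (q₁ q₂ : ℝ) (hq1 : 0 < q₁) (hq12 : q₁ < q₂)
    (hq2 : q₂ < 1) (L : ℕ) (hL : 1 ≤ L) (d : Fin L → ℕ) (hd : ∀ ℓ, 1 ≤ d ℓ) :
    ∏ ℓ, wDE q₂ (d ℓ) < ∏ ℓ, wDE q₁ (d ℓ) := by
  apply Finset.prod_lt_prod_of_nonempty
    (fun i _ => wDE_pos (by linarith) hq2 (hd i))
    (fun i _ => wDE_lt hq1 hq12 hq2 (hd i))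
  exact Finset.univ_nonempty_iff.mpr ⟨⟨0, by omega⟩⟩
end

section
/- For every natural number d ≥ 1 and every real number c with 0 < c < 1, there exists a unique real number q with 0 < q < 1 satisfying (q − q^{d+1}) / (d(1−q)) = 1 − c. That is, the DropSens per-edge dropping probability — the dropping probability for incoming edges of a node of in-degree d that makes the fraction of information preserved over each cross-edge exactly c — exists and is unique. -/
private lemma dropsens_key (d : ℕ) (q : ℝ) :
    q - q ^ (d + 1) = (1 - q) * ∑ i ∈ Finset.range d, q ^ (i + 1) := by
  have h := geom_sum_mul q d
  have hs : ∑ i ∈ Finset.range d, q ^ (i + 1) = q * ∑ i ∈ Finset.range d, q ^ i := by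
    rw [Finset.mul_sum]
    exact Finset.sum_congr rfl fun i _ => pow_succ' q i
  rw [hs]
  linear_combination q * h

private lemma dropsens_mono (d : ℕ) (hd : 1 ≤ d) :
    StrictMonoOn (fun q : ℝ => ∑ i ∈ Finset.range d, q ^ (i + 1)) (Set.Ici 0) := by
  intro a ha b hb hab
  apply Finset.sum_lt_sum
  · intro i _
    exact pow_le_pow_left₀ ha hab.le _
  · exact ⟨0, Finset.mem_range.mpr hd, by
      simpa using pow_lt_pow_left₀ hab ha (n := 1) one_ne_zero⟩

/-- Existence and uniqueness of the DropSens per-edge dropping probability: for every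
in-degree `d ≥ 1` and preservation level `c ∈ (0,1)`, there is a unique `q ∈ (0,1)`
with `(q − q^(d+1)) / (d(1−q)) = 1 − c`. -/
theorem dropsens_probability_exists_unique (d : ℕ) (hd : 1 ≤ d)
    (c : ℝ) (hc0 : 0 < c) (hc1 : c < 1) :
    ∃! q : ℝ, 0 < q ∧ q < 1 ∧ (q - q ^ (d + 1)) / ((d : ℝ) * (1 - q)) = 1 - c := by
  set f : ℝ → ℝ := fun q => ∑ i ∈ Finset.range d, q ^ (i + 1) with hf
  have hdpos : (0 : ℝ) < d := by exact_mod_cast hd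
  -- equivalence of the equation with f q = d * (1 - c) for q ∈ (0,1)
  have hequiv : ∀ q : ℝ, 0 < q → q < 1 →
      ((q - q ^ (d + 1)) / ((d : ℝ) * (1 - q)) = 1 - c ↔
        (∑ i ∈ Finset.range d, q ^ (i + 1)) = (d : ℝ) * (1 - c)) := by
    intro q hq0 hq1
    have h1q : (0 : ℝ) < 1 - q := by linarith
    rw [dropsens_key d q]
    rw [div_eq_iff (by positivity)]
    constructor
    · intro h
      exact mul_left_cancel₀ (ne_of_gt h1q)
        (by linarith [h] : (1 - q) * (∑ i ∈ Finset.range d, q ^ (i + 1)) =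
          (1 - q) * ((d : ℝ) * (1 - c)))
    · intro h; rw [h]; ring
  -- f is continuous
  have hcont : Continuous f := by
    apply continuous_finset_sum
    intro i _
    exact continuous_pow _
  have hf0 : f 0 = 0 := by
    simp [hf]
  have hf1 : f 1 = d := by
    simp [hf]
  have htarget : (0 : ℝ) < (d : ℝ) * (1 - c) := by
    have : (0 : ℝ) < 1 - c := by linarith
    positivity
  have htarget' : (d : ℝ) * (1 - c) < d := by
    nlinarith
  -- existence via IVT on [0,1]
  have hivt := intermediate_value_Ioo (le_of_lt zero_lt_one) hcont.continuousOn
    (a := (0:ℝ)) (b := 1)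
  have hmem : (d : ℝ) * (1 - c) ∈ Set.Ioo (f 0) (f 1) := by
    rw [hf0, hf1]; exact ⟨htarget, htarget'⟩
  obtain ⟨q, hq, hfq⟩ := hivt hmem
  simp only [hf] at hfq
  refine ⟨q, ⟨hq.1, hq.2, (hequiv q hq.1 hq.2).mpr hfq⟩, ?_⟩
  rintro r ⟨hr0, hr1, hr⟩
  have hfr : f r = (d : ℝ) * (1 - c) := (hequiv r hr0 hr1).mp hr
  exact (dropsens_mono d hd).injOn (le_of_lt hr0) (le_of_lt hq.1) (hfr.trans hfq.symm)
end
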